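/- Let φ(t) = (t−1)^{2r}(t+α) t^{−r} and ψ(t) = (t−1)^{4r} t^{1−2r} with r ≥ 1 and α ≠ −1. If the first essential Puiseux coefficient C₁^{(1)} of the branch of (φ, ψ) at t = 1 vanishes (i.e. the singularity at t = 1 is more degenerate than generic), then α = 1. -/

import Mathlib

/-!
Clearing the factor `τ^{4r} (1+τ)^{-2r}`, the vanishing condition says that
`g(τ) = (1 + τ) - (α' (1 + α + τ))²` is `τ²` times a function continuous at `0`.
Since `α' (1 + α) = 1`, `g(τ) = τ ((1 - 2α') - α'² τ)`, so the linear coefficient `1 - 2α'`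
must vanish, i.e. `α' = 1/2` and `α = 1`.
-/

open Filter Topology

theorem puiseux_difference_eq {K : Type*} [Field K] (r : ℕ) (α c τ : K) (hτ : 1 + τ ≠ 0) :
    τ ^ (4 * r) * (1 + τ) ^ ((1 : ℤ) - 2 * r)
        - (c * (τ ^ (2 * r) * (1 + τ + α) * (1 + τ) ^ (-(r : ℤ)))) ^ 2
      = τ ^ (4 * r) * ((1 + τ) - (c * (1 + τ + α)) ^ 2) / (1 + τ) ^ (2 * r) := by
  have hzpow : (1 + τ) ^ ((1 : ℤ) - 2 * r) = (1 + τ) / (1 + τ) ^ (2 * r) := by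
    rw [zpow_sub₀ hτ, zpow_one]
    norm_cast
  rw [hzpow, zpow_neg, zpow_natCast]
  field_simp
  ring

theorem eq_zero_of_eventually_add_mul_eq_mul {𝕜 : Type*} [NontriviallyNormedField 𝕜]
    {a b : 𝕜} {H : 𝕜 → 𝕜} (hH : ContinuousAt H 0)
    (h : ∀ᶠ τ in 𝓝[≠] 0, a + b * τ = τ * H τ) : a = 0 := by
  have hlhs : Tendsto (fun τ => a + b * τ) (𝓝[≠] 0) (𝓝 a) := by
    have : Continuous (fun τ : 𝕜 => a + b * τ) := by fun_prop
    simpa using (this.tendsto 0).mono_left nhdsWithin_le_nhds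
  have hrhs : Tendsto (fun τ => τ * H τ) (𝓝[≠] 0) (𝓝 0) := by
    have : ContinuousAt (fun τ : 𝕜 => τ * H τ) 0 := continuousAt_id.mul hH
    simpa using this.tendsto.mono_left nhdsWithin_le_nhds
  exact tendsto_nhds_unique (hlhs.congr' h) hrhs

theorem first_puiseux_coefficient_vanishes (r : ℕ) (α : ℂ) (hα : α ≠ -1)
    (φ ψ : ℂ → ℂ)
    (hφ : ∀ t : ℂ, φ t = (t - 1) ^ (2 * r) * (t + α) * t ^ (-(r : ℤ)))
    (hψ : ∀ t : ℂ, ψ t = (t - 1) ^ (4 * r) * t ^ ((1 : ℤ) - 2 * r))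
    (hC1 : ∃ h : ℂ → ℂ, AnalyticAt ℂ h 0 ∧
      ∀ᶠ τ in nhds (0 : ℂ),
        ψ (1 + τ) - ((1 / (1 + α)) * φ (1 + τ)) ^ 2 = τ ^ (4 * r + 2) * h τ) :
    α = 1 := by
  obtain ⟨h, hh, hvanish⟩ := hC1
  set c := 1 / (1 + α)
  have hc : c * (1 + α) = 1 := one_div_mul_cancel fun h0 ↦ hα (eq_neg_of_add_eq_zero_right h0)
  have hunit : ∀ᶠ τ in 𝓝 (0 : ℂ), 1 + τ ≠ 0 :=
    (continuous_const.add continuous_id).continuousAt.eventually_ne (by norm_num)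
  have hlinear : ∀ᶠ τ in 𝓝[≠] (0 : ℂ),
      (1 - 2 * c) + (-c ^ 2) * τ = τ * ((1 + τ) ^ (2 * r) * h τ) := by
    filter_upwards [nhdsWithin_le_nhds (hvanish.and hunit), self_mem_nhdsWithin]
      with τ ⟨hτ, hu⟩ hτ0
    rw [hψ, hφ, add_sub_cancel_left, puiseux_difference_eq r α c τ hu,
      show (1 + τ) - (c * (1 + τ + α)) ^ 2 = τ * ((1 - 2 * c) + (-c ^ 2) * τ) by
        linear_combination (-(1 + c * (1 + α) + 2 * c * τ)) * hc] at hτ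
    apply mul_left_cancel₀ (pow_ne_zero (4 * r + 1) hτ0)
    calc τ ^ (4 * r + 1) * ((1 - 2 * c) + (-c ^ 2) * τ)
        = τ ^ (4 * r) * (τ * ((1 - 2 * c) + (-c ^ 2) * τ)) / (1 + τ) ^ (2 * r)
          * (1 + τ) ^ (2 * r) := by field_simp; ring
      _ = τ ^ (4 * r + 1) * (τ * ((1 + τ) ^ (2 * r) * h τ)) := by rw [hτ]; ring
  have hc_half : 1 - 2 * c = 0 :=
    eq_zero_of_eventually_add_mul_eq_mul
      ((continuous_const.add continuous_id).pow _ |>.continuousAt.mul hh.continuousAt) hlinear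
  linear_combination 2 * hc + (1 + α) * hc_half
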